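/- Let M1 and M2 be simple matroids on E1 and E2 with E1 ∩ E2 = {p}, where p is not a coloop of M1 or of M2. Let M = P_p(M1,M2) be the parallel connection (the generalized parallel connection along the modular flat {p}) and let M' = M \ p be the deletion of p from M. Then the hyperplanes of M' are exactly the sets H − {p} where H ranges over the hyperplanes of M. -/

import Mathlib

open Matroid Set

variable {α : Type*}

/-- The rank of a set `X` in a matroid `M`: the supremum of the cardinalities of the
independent subsets of `X`. -/
noncomputable def mRk (M : Matroid α) (X : Set α) : ℕ :=
  sSup {n : ℕ | ∃ I, M.Indep I ∧ I ⊆ X ∧ I.ncard = n}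

/-- The rank of a matroid `M`. -/
noncomputable def mRank (M : Matroid α) : ℕ := mRk M M.E

/-- `T` is a modular flat of `M`: `T` is a flat and
`r(T) + r(F) = r(T ∩ F) + r(T ∪ F)` holds for every flat `F` of `M`. -/
def IsModFlat (M : Matroid α) (T : Set α) : Prop :=
  M.IsFlat T ∧ ∀ F, M.IsFlat F → mRk M T + mRk M F = mRk M (T ∩ F) + mRk M (T ∪ F)

/-- `H` is a hyperplane of `M`: a flat of rank `r(M) - 1`. -/
def IsHyp (M : Matroid α) (H : Set α) : Prop :=
  M.IsFlat H ∧ mRk M H + 1 = mRank M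

/-- `F` is a corank-2 flat of `M`: a flat of rank `r(M) - 2`. -/
def IsCr2Flat (M : Matroid α) (F : Set α) : Prop :=
  M.IsFlat F ∧ mRk M F + 2 = mRank M

/-- `F` is a corank-3 flat of `M`: a flat of rank `r(M) - 3`. -/
def IsCr3Flat (M : Matroid α) (F : Set α) : Prop :=
  M.IsFlat F ∧ mRk M F + 3 = mRank M

/-- `(H1, H2, H3)` is a modular triple of hyperplanes of `M`: the three sets are
hyperplanes, `F = H1 ∩ H2 ∩ H3` is a corank-2 flat, and `Hi ∩ Hj = F` for all `i ≠ j`. -/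
def ModTriple (M : Matroid α) (H1 H2 H3 : Set α) : Prop :=
  IsHyp M H1 ∧ IsHyp M H2 ∧ IsHyp M H3 ∧
  IsCr2Flat M (H1 ∩ H2 ∩ H3) ∧
  H1 ∩ H2 = H1 ∩ H2 ∩ H3 ∧ H1 ∩ H3 = H1 ∩ H2 ∩ H3 ∧ H2 ∩ H3 = H1 ∩ H2 ∩ H3

/-- `M` is the generalized parallel connection of `M1` and `M2`: its ground set is
`M1.E ∪ M2.E`, and its flats are exactly the sets `F ⊆ M1.E ∪ M2.E` such that
`F ∩ M1.E` is a flat of `M1` and `F ∩ M2.E` is a flat of `M2`. -/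
def IsGPC (M1 M2 M : Matroid α) : Prop :=
  M.E = M1.E ∪ M2.E ∧
    ∀ F : Set α, M.IsFlat F ↔ F ⊆ M1.E ∪ M2.E ∧ M1.IsFlat (F ∩ M1.E) ∧ M2.IsFlat (F ∩ M2.E)

/-- The deletion `M \ D` of a set `D` from `M`. -/
def mDelete (M : Matroid α) (D : Set α) : Matroid α := M ↾ (M.E \ D)

/-- The contraction `M / C`, obtained via duality as `(M✶ \ C)✶`. -/
def mContract (M : Matroid α) (C : Set α) : Matroid α := (M✶ ↾ (M.E \ C))✶

/-- `N` is a minor of `M`: `N` is obtained from `M` by a contraction followed by a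
deletion. -/
def MinorOf (N M : Matroid α) : Prop :=
  ∃ C D : Set α, C ⊆ M.E ∧ D ⊆ M.E ∧ Disjoint C D ∧
    N = (mContract M C) ↾ ((M.E \ C) \ D)

/-- `C` is a circuit of `M`: a minimal dependent subset of the ground set. -/
def MCircuit (M : Matroid α) (C : Set α) : Prop :=
  C ⊆ M.E ∧ ¬ M.Indep C ∧ ∀ D ⊂ C, M.Indep D

/-- `e` is a loop of `M`. -/
def MLoop (M : Matroid α) (e : α) : Prop := e ∈ M.E ∧ ¬ M.Indep {e}

/-- `e` is a coloop of `M`: an element of the ground set lying in every base. -/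
def MColoop (M : Matroid α) (e : α) : Prop := e ∈ M.E ∧ ∀ B, M.IsBase B → e ∈ B

/-- `M` is simple: every subset of the ground set with at most two elements is
independent; equivalently, `M` has no loops and no two-element circuits. -/
def MSimple (M : Matroid α) : Prop := ∀ S ⊆ M.E, S.ncard ≤ 2 → M.Indep S

/-- `X` is co-independent in `M`: the complement `M.E \ X` is spanning. -/
def MCoindep (M : Matroid α) (X : Set α) : Prop := M.Spanning (M.E \ X)

/-- The connected component of `M` containing `e`: the set of `f` in the ground set with
`e = f` or some circuit containing both `e` and `f`. -/
def MComponentOf (M : Matroid α) (e : α) : Set α :=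
  {f | f ∈ M.E ∧ (e = f ∨ ∃ C, MCircuit M C ∧ e ∈ C ∧ f ∈ C)}

/-- `K` is a connected component of `M`. -/
def MComponent (M : Matroid α) (K : Set α) : Prop :=
  ∃ e ∈ M.E, K = MComponentOf M e

/-- The restriction `M|X` is (isomorphic to) the rank-2 uniform matroid `U_{2,n}`:
`X` is an `n`-element subset of the ground set and a subset of `X` is independent
exactly when it has at most 2 elements. -/
def RestrIsU2 (M : Matroid α) (X : Set α) (n : ℕ) : Prop :=
  X ⊆ M.E ∧ X.ncard = n ∧ ∀ S ⊆ X, (M.Indep S ↔ S.ncard ≤ 2)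

/-- `Θ` is a copy of the matroid `Θ_n`, with `X = {x 1, …, x n}` and `Y = {y 1, …, y n}`
disjoint, whose bases are exactly `Y`, the sets `(Y \ {y i}) ∪ {x j}` for `i ≠ j`, and
the sets `(Y \ Y') ∪ X'` with `Y' ⊆ Y`, `X' ⊆ X`, `|Y'| = |X'| = 2`. -/
def IsTheta (n : ℕ) (x y : Fin n → α) (Θ : Matroid α) : Prop :=
  Function.Injective x ∧ Function.Injective y ∧ (∀ i j, x i ≠ y j) ∧
  Θ.E = Set.range x ∪ Set.range y ∧
  ∀ B : Set α, Θ.IsBase B ↔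
    (B = Set.range y ∨
    (∃ i j, i ≠ j ∧ B = (Set.range y \ {y i}) ∪ {x j}) ∨
    (∃ P Q : Set (Fin n), P.ncard = 2 ∧ Q.ncard = 2 ∧
      B = (Set.range y \ (y '' P)) ∪ x '' Q))

/-- `M` is representable over the field `K`: there is a map from the ground set to a
`K`-vector space under which a subset of the ground set is independent in `M` exactly
when its image (as a family) is linearly independent. -/
def RepOver (K : Type*) [Field K] {α : Type*} (M : Matroid α) : Prop :=
  ∃ (V : Type) (_ : AddCommGroup V) (_ : Module K V) (φ : α → V),
    ∀ I ⊆ M.E, (M.Indep I ↔ LinearIndependent K (fun e : I => φ e.1))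

section Aux

variable {M : Matroid α} {F G H X R I J : Set α}

lemma aux_closure_flat (M : Matroid α) (X : Set α) : M.IsFlat (M.closure X) := by
  have h := M.closure_eq_subtypeClosure X
  have h2 : M.subtypeClosure.IsClosed (M.subtypeClosure ⟨X ∩ M.E, inter_subset_right⟩) :=
    M.subtypeClosure.isClosed_closure _
  rw [isClosed_iff_isFlat] at h2
  rwa [h]

lemma aux_flat_of_closure_eq (hX : M.closure X = X) : M.IsFlat X := hX ▸ aux_closure_flat M X

lemma aux_flat_inter (hF : M.IsFlat F) (hG : M.IsFlat G) : M.IsFlat (F ∩ G) := by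
  apply aux_flat_of_closure_eq
  apply subset_antisymm
  · exact subset_inter
      ((M.closure_subset_closure inter_subset_left).trans hF.closure.subset)
      ((M.closure_subset_closure inter_subset_right).trans hG.closure.subset)
  · exact M.subset_closure _ (inter_subset_left.trans hF.subset_ground)

lemma aux_restrict_closure (hR : R ⊆ M.E) (hX : X ⊆ R) :
    (M ↾ R).closure X = M.closure X ∩ R := by
  obtain ⟨I, hI⟩ := M.exists_isBasis X (hX.trans hR)
  have hI' : (M ↾ R).IsBasis I X := (isBasis_restrict_iff hR).2 ⟨hI, hX⟩
  rw [← hI'.closure_eq_closure, ← hI.closure_eq_closure]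
  ext x
  simp only [mem_inter_iff, hI.indep.mem_closure_iff',
    (hI'.indep).mem_closure_iff', restrict_ground_eq, restrict_indep_iff,
    insert_subset_iff]
  constructor
  · rintro ⟨hxR, h2⟩
    exact ⟨⟨hR hxR, fun hind => h2 ⟨hind, hxR, (hI.subset.trans hX)⟩⟩, hxR⟩
  · rintro ⟨⟨hxE, h2⟩, hxR⟩
    exact ⟨hxR, fun h => h2 h.1⟩

lemma aux_flat_restrict_iff (hR : R ⊆ M.E) :
    (M ↾ R).IsFlat G ↔ ∃ F, M.IsFlat F ∧ G = F ∩ R := by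
  constructor
  · intro h
    have hG : G ⊆ R := h.subset_ground
    refine ⟨M.closure G, aux_closure_flat M G, ?_⟩
    have h2 := aux_restrict_closure (M := M) hR hG
    rw [h.closure] at h2
    exact h2
  · rintro ⟨F, hF, rfl⟩
    apply aux_flat_of_closure_eq
    apply subset_antisymm
    · rw [aux_restrict_closure hR inter_subset_right]
      exact inter_subset_inter_left _
        ((M.closure_subset_closure inter_subset_left).trans hF.closure.subset)
    · exact (M ↾ R).subset_closure _ (by simpa using inter_subset_right)

lemma aux_mRk_eq_ncard_basis' [M.Finite] (hI : M.IsBasis' I X) : mRk M X = I.ncard := by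
  apply le_antisymm
  · refine csSup_le ⟨0, ∅, M.empty_indep, empty_subset _, by simp⟩ ?_
    rintro n ⟨J, hJ, hJX, rfl⟩
    obtain ⟨I', hI', hJI'⟩ := hJ.subset_isBasis'_of_subset hJX
    have hcard : I'.ncard = I.ncard := by
      have h := hI'.encard_eq_encard hI
      rw [Set.ncard_def, h, ← Set.ncard_def]
    exact le_trans (Set.ncard_le_ncard hJI'
      (M.ground_finite.subset hI'.indep.subset_ground)) hcard.le
  · apply le_csSup
    · refine ⟨M.E.ncard, ?_⟩
      rintro n ⟨J, hJ, _, rfl⟩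
      exact Set.ncard_le_ncard hJ.subset_ground M.ground_finite
    · exact ⟨I, hI.indep, hI.subset, rfl⟩

lemma aux_mRank_eq_ncard_base [M.Finite] {B : Set α} (hB : M.IsBase B) : mRank M = B.ncard :=
  aux_mRk_eq_ncard_basis' (isBasis_ground_iff.2 hB).isBasis'

lemma aux_isHyp_iff [M.Finite] :
    IsHyp M H ↔ M.IsFlat H ∧ H ≠ M.E ∧ ∀ F, M.IsFlat F → H ⊂ F → F = M.E := by
  constructor
  · rintro ⟨hflat, hrk⟩
    obtain ⟨I, hI⟩ := M.exists_isBasis H hflat.subset_ground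
    have hIcard : mRk M H = I.ncard := aux_mRk_eq_ncard_basis' hI.isBasis'
    have hne : H ≠ M.E := by
      rintro rfl
      have h2 : mRank M = I.ncard := aux_mRk_eq_ncard_basis' hI.isBasis'
      omega
    refine ⟨hflat, hne, fun F hF hHF => ?_⟩
    obtain ⟨e, heF, heH⟩ := exists_of_ssubset hHF
    have heE : e ∈ M.E := hF.subset_ground heF
    have hcl : M.closure I = H := by rw [hI.closure_eq_closure, hflat.closure]
    have heI : e ∉ I := fun h => heH (hI.subset h)
    have hind : M.Indep (insert e I) := by
      rw [hI.indep.insert_indep_iff_of_notMem heI, hcl]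
      exact ⟨heE, heH⟩
    obtain ⟨B, hB, hsub⟩ := hind.exists_isBase_superset
    have hBcard : mRank M = B.ncard := aux_mRank_eq_ncard_base hB
    have hBfin : B.Finite := M.ground_finite.subset hB.subset_ground
    have hIfin : I.Finite := M.ground_finite.subset hI.indep.subset_ground
    have hcard : (insert e I).ncard = I.ncard + 1 := Set.ncard_insert_of_notMem heI hIfin
    have hEq : insert e I = B := by
      apply Set.eq_of_subset_of_ncard_le hsub ?_ hBfin
      omega
    have hspan : M.closure (insert e I) = M.E := hEq ▸ hB.closure_eq
    have hEF : M.E ⊆ F := by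
      rw [← hspan, ← hF.closure]
      exact M.closure_subset_closure (insert_subset heF (hI.subset.trans hHF.subset))
    exact hEF.antisymm hF.subset_ground |>.symm
  · rintro ⟨hflat, hne, hmax⟩
    obtain ⟨I, hI⟩ := M.exists_isBasis H hflat.subset_ground
    obtain ⟨e, heE, heH⟩ : ∃ e, e ∈ M.E ∧ e ∉ H := by
      by_contra h
      push_neg at h
      exact hne (hflat.subset_ground.antisymm h)
    have hcl : M.closure I = H := by rw [hI.closure_eq_closure, hflat.closure]
    have heI : e ∉ I := fun h => heH (hI.subset h)
    have hind : M.Indep (insert e I) := by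
      rw [hI.indep.insert_indep_iff_of_notMem heI, hcl]
      exact ⟨heE, heH⟩
    have hHss : H ⊂ M.closure (insert e I) := by
      refine ssubset_of_subset_of_ne ?_ ?_
      · rw [← hcl]; exact M.closure_subset_closure (subset_insert _ _)
      · intro h
        have h2 := M.subset_closure (insert e I) hind.subset_ground (mem_insert e I)
        rw [← h] at h2
        exact heH h2
    have hclE : M.closure (insert e I) = M.E :=
      hmax _ (aux_closure_flat M _) hHss
    have hbase : M.IsBase (insert e I) :=
      hind.isBase_of_ground_subset_closure hclE.symm.subset
    have h1 : mRank M = (insert e I).ncard := aux_mRank_eq_ncard_base hbase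
    have hIfin : I.Finite := M.ground_finite.subset hI.indep.subset_ground
    have h2 : (insert e I).ncard = I.ncard + 1 := Set.ncard_insert_of_notMem heI hIfin
    have h3 : mRk M H = I.ncard := aux_mRk_eq_ncard_basis' hI.isBasis'
    exact ⟨hflat, by omega⟩

end Aux

/-- For simple matroids `M1, M2` with `E1 ∩ E2 = {p}` and `p` not a
coloop of either, the hyperplanes of `M' = P_p(M1, M2) \ p` are exactly the sets
`H \ {p}` for `H` a hyperplane of `M = P_p(M1, M2)`. -/
theorem parallel_connection_delete_hyperplanes (M1 M2 M : Matroid α)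
    [M1.Finite] [M2.Finite] (E1 E2 : Set α) (p : α)
    (hE1 : M1.E = E1) (hE2 : M2.E = E2) (hp : E1 ∩ E2 = {p})
    (hs1 : MSimple M1) (hs2 : MSimple M2)
    (hc1 : ¬ MColoop M1 p) (hc2 : ¬ MColoop M2 p)
    (hM : IsGPC M1 M2 M) :
    ∀ H' : Set α, IsHyp (mDelete M {p}) H' ↔ ∃ H, IsHyp M H ∧ H' = H \ {p} := by
  obtain ⟨hME, hMflat⟩ := hM
  subst hE1; subst hE2
  have hpmem : p ∈ M1.E ∩ M2.E := by rw [hp]; exact mem_singleton p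
  obtain ⟨hp1, hp2⟩ := hpmem
  haveI hMfin : M.Finite := ⟨by rw [hME]; exact M1.ground_finite.union M2.ground_finite⟩
  have hpE : p ∈ M.E := by rw [hME]; exact Or.inl hp1
  have hRsub : M.E \ {p} ⊆ M.E := diff_subset
  haveI hNfin : (M ↾ (M.E \ {p})).Finite := M.restrict_finite (M.ground_finite.subset hRsub)
  have hNflat : ∀ G, (M ↾ (M.E \ {p})).IsFlat G ↔ ∃ F, M.IsFlat F ∧ G = F \ {p} := by
    intro G
    rw [aux_flat_restrict_iff hRsub]
    constructor
    · rintro ⟨F, hF, rfl⟩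
      refine ⟨F, hF, ?_⟩
      have hFs := hF.subset_ground
      ext x
      simp only [mem_inter_iff, mem_diff, mem_singleton_iff]
      exact ⟨fun h => ⟨h.1, h.2.2⟩, fun h => ⟨h.1, hFs h.1, h.2⟩⟩
    · rintro ⟨F, hF, rfl⟩
      refine ⟨F, hF, ?_⟩
      have hFs := hF.subset_ground
      ext x
      simp only [mem_inter_iff, mem_diff, mem_singleton_iff]
      exact ⟨fun h => ⟨h.1, hFs h.1, h.2⟩, fun h => ⟨h.1, h.2.2⟩⟩
  have hnf : ∀ (N : Matroid α), p ∈ N.E → ¬ MColoop N p → ¬ N.IsFlat (N.E \ {p}) := by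
    intro N hpN hcN hflat
    rw [MColoop, not_and] at hcN
    push_neg at hcN
    obtain ⟨B, hB, hpB⟩ := hcN hpN
    have hBsub : B ⊆ N.E \ {p} := subset_diff_singleton hB.subset_ground hpB
    have h1 : N.E ⊆ N.E \ {p} := by
      have h2 : N.closure B ⊆ N.closure (N.E \ {p}) := N.closure_subset_closure hBsub
      rwa [hB.closure_eq, hflat.closure] at h2
    exact (h1 hpN).2 rfl
  have hNF1 := hnf M1 hp1 hc1
  have hNF2 := hnf M2 hp2 hc2
  have hNFE : ¬ M.IsFlat (M.E \ {p}) := by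
    intro hflat
    apply hNF2
    have h2 := ((hMflat _).1 hflat).2.2
    have heq : (M.E \ {p}) ∩ M2.E = M2.E \ {p} := by
      rw [hME]; ext x
      simp only [mem_inter_iff, mem_diff, mem_union, mem_singleton_iff]
      exact ⟨fun h => ⟨h.2, h.1.2⟩, fun h => ⟨⟨Or.inr h.1, h.2⟩, h.1⟩⟩
    rwa [heq] at h2
  have hL : ∀ H, M.IsFlat H → p ∈ H → (∀ F, M.IsFlat F → H ⊂ F → F = M.E) →
      (H ∩ M1.E = M1.E ∨ H ∩ M2.E = M2.E) := by
    intro H hH hpH hmax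
    by_contra hcon
    push_neg at hcon
    obtain ⟨h1, h2⟩ := hcon
    have hHsub : H ⊆ M1.E ∪ M2.E := ((hMflat _).1 hH).1
    have hF2 : M2.IsFlat (H ∩ M2.E) := ((hMflat _).1 hH).2.2
    have hFE2 : (M1.E ∪ (H ∩ M2.E)) ∩ M2.E = H ∩ M2.E := by
      rw [union_inter_distrib_right, hp, inter_assoc, inter_self]
      exact union_eq_self_of_subset_left
        (singleton_subset_iff.2 (show p ∈ H ∩ M2.E from ⟨hpH, hp2⟩))
    have hF : M.IsFlat (M1.E ∪ (H ∩ M2.E)) := by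
      rw [hMflat]
      refine ⟨union_subset subset_union_left
        (inter_subset_right.trans subset_union_right), ?_, ?_⟩
      · rw [inter_eq_self_of_subset_right subset_union_left]
        exact M1.ground_isFlat
      · rw [hFE2]; exact hF2
    have hHF : H ⊆ M1.E ∪ (H ∩ M2.E) := by
      intro x hx
      rcases hHsub hx with h | h
      · exact Or.inl h
      · exact Or.inr ⟨hx, h⟩
    have hne : H ≠ M1.E ∪ (H ∩ M2.E) := by
      intro h
      apply h1
      apply subset_antisymm inter_subset_right
      intro x hx
      refine ⟨?_, hx⟩
      rw [h]
      exact Or.inl hx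
    have hFE := hmax _ hF (ssubset_of_subset_of_ne hHF hne)
    apply h2
    rw [← hFE2, hFE, inter_eq_self_of_subset_right]
    rw [hME]
    exact subset_union_right
  have hK : ∀ H, M.IsFlat H → p ∈ H → (∀ F, M.IsFlat F → H ⊂ F → F = M.E) →
      ¬ M.IsFlat (H \ {p}) := by
    intro H hH hpH hmax hflat
    rcases hL H hH hpH hmax with h1 | h1
    · apply hNF1
      have h3 := ((hMflat _).1 hflat).2.1
      have heq : (H \ {p}) ∩ M1.E = M1.E \ {p} := by
        ext x
        simp only [mem_inter_iff, mem_diff, mem_singleton_iff]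
        constructor
        · rintro ⟨⟨hxH, hxp⟩, hx1⟩
          exact ⟨hx1, hxp⟩
        · rintro ⟨hx1, hxp⟩
          rw [← h1] at hx1
          exact ⟨⟨hx1.1, hxp⟩, hx1.2⟩
      rwa [heq] at h3
    · apply hNF2
      have h3 := ((hMflat _).1 hflat).2.2
      have heq : (H \ {p}) ∩ M2.E = M2.E \ {p} := by
        ext x
        simp only [mem_inter_iff, mem_diff, mem_singleton_iff]
        constructor
        · rintro ⟨⟨hxH, hxp⟩, hx1⟩
          exact ⟨hx1, hxp⟩
        · rintro ⟨hx1, hxp⟩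
          rw [← h1] at hx1
          exact ⟨⟨hx1.1, hxp⟩, hx1.2⟩
      rwa [heq] at h3
  intro H'
  rw [show mDelete M {p} = M ↾ (M.E \ {p}) from rfl, aux_isHyp_iff]
  constructor
  · rintro ⟨hflat', hne', hmax'⟩
    obtain ⟨F, hF, rfl⟩ := (hNflat _).1 hflat'
    have hne'' : F \ {p} ≠ M.E \ {p} := hne'
    have hmax'' : ∀ G, M.IsFlat G → F \ {p} ⊂ G \ {p} → G \ {p} = M.E \ {p} := by
      intro G hG hss
      exact hmax' (G \ {p}) ((hNflat (G \ {p})).2 ⟨G, hG, rfl⟩) hss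
    by_cases hpF : p ∈ F
    · refine ⟨F, ?_, rfl⟩
      rw [aux_isHyp_iff]
      refine ⟨hF, ?_, ?_⟩
      · rintro rfl
        exact hne'' rfl
      · intro G hG hFG
        by_cases hGe : G \ {p} = F \ {p}
        · exfalso
          apply hFG.not_subset
          intro x hx
          by_cases hxp : x = p
          · exact hxp ▸ hpF
          · exact (show x ∈ F \ {p} by rw [← hGe]; exact ⟨hx, hxp⟩).1
        · have hGE := hmax'' G hG (ssubset_of_subset_of_ne
            (diff_subset_diff_left hFG.subset) (Ne.symm hGe))
          have hpG : p ∈ G := hFG.subset hpF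
          apply hG.subset_ground.antisymm
          intro x hx
          by_cases hxp : x = p
          · exact hxp ▸ hpG
          · exact (show x ∈ G \ {p} by rw [hGE]; exact ⟨hx, hxp⟩).1
    · have hFp : F \ {p} = F := diff_singleton_eq_self hpF
      have hpFE : F ∪ {p} ⊆ M.E :=
        union_subset hF.subset_ground (singleton_subset_iff.2 hpE)
      have hKflat : M.IsFlat (M.closure (F ∪ {p})) := aux_closure_flat M _
      have hpK : p ∈ M.closure (F ∪ {p}) := M.subset_closure _ hpFE (Or.inr rfl)
      have hFK : F ⊆ M.closure (F ∪ {p}) :=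
        subset_union_left.trans (M.subset_closure _ hpFE)
      by_cases hKE : M.closure (F ∪ {p}) = M.E
      · refine ⟨F, ?_, rfl⟩
        rw [aux_isHyp_iff]
        refine ⟨hF, fun h => hpF (by rw [h]; exact hpE), ?_⟩
        intro G hG hFG
        by_cases hGe : G \ {p} = F
        · have hpG : p ∈ G := by
            obtain ⟨x, hxG, hxF⟩ := exists_of_ssubset hFG
            by_cases hxp : x = p
            · exact hxp ▸ hxG
            · exact absurd (show x ∈ F by rw [← hGe]; exact ⟨hxG, hxp⟩) hxF
          have hKG : M.closure (F ∪ {p}) ⊆ G := by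
            rw [← hG.closure]
            exact M.closure_subset_closure
              (union_subset hFG.subset (singleton_subset_iff.2 hpG))
          exact hG.subset_ground.antisymm (hKE ▸ hKG)
        · have hss : F \ {p} ⊂ G \ {p} := by
            rw [hFp]
            exact ssubset_of_subset_of_ne
              (subset_diff_singleton hFG.subset hpF) (Ne.symm hGe)
          have hGE := hmax'' G hG hss
          by_cases hpG : p ∈ G
          · apply hG.subset_ground.antisymm
            intro x hx
            by_cases hxp : x = p
            · exact hxp ▸ hpG
            · exact (show x ∈ G \ {p} by rw [hGE]; exact ⟨hx, hxp⟩).1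
          · exfalso
            apply hNFE
            have hGeq : G = M.E \ {p} := by
              rw [← hGE, diff_singleton_eq_self hpG]
            exact hGeq ▸ hG
      · have hKp : M.closure (F ∪ {p}) \ {p} = F := by
          by_contra hne2
          have hss : F \ {p} ⊂ M.closure (F ∪ {p}) \ {p} := by
            rw [hFp]
            exact ssubset_of_subset_of_ne
              (subset_diff_singleton hFK hpF) (Ne.symm hne2)
          have hKEp := hmax'' _ hKflat hss
          apply hKE
          apply hKflat.subset_ground.antisymm
          intro x hx
          by_cases hxp : x = p
          · exact hxp ▸ hpK
          · exact (show x ∈ M.closure (F ∪ {p}) \ {p} by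
              rw [hKEp]; exact ⟨hx, hxp⟩).1
        refine ⟨M.closure (F ∪ {p}), ?_, by rw [hFp, hKp]⟩
        rw [aux_isHyp_iff]
        refine ⟨hKflat, hKE, ?_⟩
        intro G hG hKG
        have hpG : p ∈ G := hKG.subset hpK
        by_cases hGe : G \ {p} = F
        · exfalso
          apply hKG.not_subset
          intro x hx
          by_cases hxp : x = p
          · exact hxp ▸ hpK
          · exact hFK (show x ∈ F by rw [← hGe]; exact ⟨hx, hxp⟩)
        · have hss : F \ {p} ⊂ G \ {p} := by
            rw [hFp]
            refine ssubset_of_subset_of_ne ?_ (Ne.symm hGe)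
            rw [← hKp]
            exact diff_subset_diff_left hKG.subset
          have hGE := hmax'' G hG hss
          apply hG.subset_ground.antisymm
          intro x hx
          by_cases hxp : x = p
          · exact hxp ▸ hpG
          · exact (show x ∈ G \ {p} by rw [hGE]; exact ⟨hx, hxp⟩).1
  · rintro ⟨H, hH, rfl⟩
    rw [aux_isHyp_iff] at hH
    obtain ⟨hHflat, hHne, hHmax⟩ := hH
    refine ⟨(hNflat _).2 ⟨H, hHflat, rfl⟩, ?_, ?_⟩
    · intro h
      have h' : H \ {p} = M.E \ {p} := h
      by_cases hpH : p ∈ H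
      · apply hHne
        apply hHflat.subset_ground.antisymm
        intro x hx
        by_cases hxp : x = p
        · exact hxp ▸ hpH
        · exact (show x ∈ H \ {p} by rw [h']; exact ⟨hx, hxp⟩).1
      · apply hNFE
        have hHeq : H = M.E \ {p} := by
          rw [← h', diff_singleton_eq_self hpH]
        exact hHeq ▸ hHflat
    · intro G hG hss
      obtain ⟨F, hF, rfl⟩ := (hNflat _).1 hG
      show F \ {p} = M.E \ {p}
      by_cases hpH : p ∈ H
      · by_cases hpF : p ∈ F
        · have hHF : H ⊆ F := by
            intro x hx
            by_cases hxp : x = p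
            · exact hxp ▸ hpF
            · exact (hss.subset ⟨hx, hxp⟩).1
          have hne : H ≠ F := by
            rintro rfl
            exact hss.ne rfl
          rw [hHmax F hF (ssubset_of_subset_of_ne hHF hne)]
        · exfalso
          apply hK H hHflat hpH hHmax
          have hHp : H \ {p} = F ∩ H := by
            apply subset_antisymm
            · exact subset_inter (hss.subset.trans diff_subset) diff_subset
            · intro x hx
              refine ⟨hx.2, fun hxp => ?_⟩
              rw [mem_singleton_iff] at hxp
              subst hxp
              exact hpF hx.1
          rw [hHp]
          exact aux_flat_inter hF hHflat
      · have hHp : H \ {p} = H := diff_singleton_eq_self hpH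
        have hHF : H ⊂ F := by
          rw [hHp] at hss
          exact hss.trans_subset diff_subset
        rw [hHmax F hF hHF]
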